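/- arXiv:2501.17009 — 8 statements merged into one kernel-verified Lean document; each statement's English description precedes it below -/
import Mathlib

section
/- For 0 < |α| < 1, the Lie algebras ℝ² ⋊_{σ_α} ℝ and ℝ² ⋊_{σ_I} ℝ are not isomorphic, where σ_α(t) = diag(−t, −αt) and σ_I(t) = diag(t, t). -/
/-- Bracket of ℝ² ⋊_{σ_α} ℝ where `σ_α t = diag (−t, −αt)`. -/
noncomputable def brakAlpha (α : ℝ) (u v : (Fin 2 → ℝ) × ℝ) : (Fin 2 → ℝ) × ℝ :=
  (![-(u.2) * v.1 0 + v.2 * u.1 0, α * (-(u.2) * v.1 1 + v.2 * u.1 1)], 0)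

/-- Bracket of ℝ² ⋊_{σ_I} ℝ where `σ_I t = diag (t, t)`. -/
noncomputable def brakI (u v : (Fin 2 → ℝ) × ℝ) : (Fin 2 → ℝ) × ℝ :=
  (![u.2 * v.1 0 - v.2 * u.1 0, u.2 * v.1 1 - v.2 * u.1 1], 0)

lemma brakI_smul (p q : (Fin 2 → ℝ) × ℝ) (hq : q.2 = 0) :
    brakI p q = p.2 • q := by
  unfold brakI
  ext i
  · fin_cases i <;> simp [hq]
  · simp [hq]

theorem semidirect_alpha_not_iso_I (α : ℝ) (h1 : 0 < |α|) (h2 : |α| < 1) :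
    ¬ ∃ f : ((Fin 2 → ℝ) × ℝ) ≃ₗ[ℝ] ((Fin 2 → ℝ) × ℝ),
        ∀ u v, f (brakAlpha α u v) = brakI (f u) (f v) := by
  rintro ⟨f, hf⟩
  have hα0 : α ≠ 0 := by intro h; simp [h] at h1
  have hα1 : α ≠ 1 := by intro h; simp [h] at h2
  set a : (Fin 2 → ℝ) × ℝ := (![0, 0], 1) with ha
  set b : (Fin 2 → ℝ) × ℝ := (![1, 1], 0) with hb
  set Y : (Fin 2 → ℝ) × ℝ := brakAlpha α a b with hY
  set X : (Fin 2 → ℝ) × ℝ := brakAlpha α a Y with hX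
  have hYval : Y = (![-1, -α], 0) := by
    simp [hY, brakAlpha, ha, hb]
  have hXval : X = (![1, α * α], 0) := by
    simp [hX, hYval, brakAlpha, ha]
  have hfY2 : (f Y).2 = 0 := by
    rw [hY, hf]
    simp [brakI]
  have key : f X = (f a).2 • f Y := by
    rw [hX, hf, brakI_smul _ _ hfY2]
  rw [← map_smul] at key
  have hXY : X = (f a).2 • Y := f.injective key
  rw [hXval, hYval] at hXY
  have h0 : (1 : ℝ) = (f a).2 * (-1) := by
    have := congrArg (fun p => p.1 0) hXY
    simpa using this
  have h1' : α * α = (f a).2 * (-α) := by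
    have := congrArg (fun p => p.1 1) hXY
    simpa using this
  have hc : (f a).2 = -1 := by linarith
  rw [hc] at h1'
  have : α * (α - 1) = 0 := by ring_nf; linarith [h1']
  rcases mul_eq_zero.1 this with h | h
  · exact hα0 h
  · exact hα1 (by linarith)
end

section
/- Let M₂ be the 4×4 symmetric positive definite matrix with upper-left 2×2 block [[1/α², −β/α²],[−β/α², 1+β²/α²]] (α>0, β≠0) and lower-right 2×2 block the identity. A matrix A = diag(1, a₆, B) (with B a 2×2 block) satisfies AᵀM₂A = M₂ if and only if a₆ = 1 and B ∈ O(2). -/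
/-!
Both matrices are block diagonal for the splitting 4 = 2 + 2, so the equation decouples into
`diag(1, a₆)ᵀ G diag(1, a₆) = G` for the upper block `G` and `Bᵀ B = 1` for the lower one.
Conjugating `G` by `diag(1, a₆)` multiplies its off-diagonal entry `-β/α² ≠ 0` by `a₆`,
which forces `a₆ = 1`.
-/

open Matrix

section

variable {R : Type*}

theorem of_fin_four_eq_reindex_fromBlocks [Zero R] (a b c d e f g h : R) :
    !![a, b, 0, 0; c, d, 0, 0; 0, 0, e, f; 0, 0, g, h] =
      reindex finSumFinEquiv finSumFinEquiv (fromBlocks !![a, b; c, d] 0 0 !![e, f; g, h]) := by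
  ext i j
  fin_cases i <;> fin_cases j <;> rfl

variable [CommRing R]

theorem transpose_reindex_mul_reindex_mul_reindex {l m : Type*} [Fintype l] [Fintype m]
    (e : l ≃ m) (A G : Matrix l l R) :
    (reindex e e A)ᵀ * reindex e e G * reindex e e A = reindex e e (Aᵀ * G * A) := by
  simp [submatrix_mul_equiv]

theorem fromBlocks_transpose_mul_mul_fromBlocks {l m : Type*} [Fintype l] [Fintype m]
    (A G : Matrix l l R) (B H : Matrix m m R) :
    (fromBlocks A 0 0 B)ᵀ * fromBlocks G 0 0 H * fromBlocks A 0 0 B =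
      fromBlocks (Aᵀ * G * A) 0 0 (Bᵀ * H * B) := by
  simp [fromBlocks_transpose, fromBlocks_multiply]

theorem transpose_mul_mul_diag_one_eq_self_iff [IsDomain R] {G : Matrix (Fin 2) (Fin 2) R}
    (hG : G 0 1 ≠ 0) (a : R) :
    !![1, 0; 0, a]ᵀ * G * !![1, 0; 0, a] = G ↔ a = 1 := by
  rw [show !![1, 0; 0, a] = diagonal ![1, a] from (diagonal_fin_two ![1, a]).symm]
  refine ⟨fun h ↦ ?_, fun ha ↦ ?_⟩
  · have h01 : G 0 1 * a = G 0 1 := by simpa using congrFun (congrFun h 0) 1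
    simpa [hG] using h01
  · ext i j
    fin_cases i <;> fin_cases j <;> simp [ha]

end

theorem isometric_automorphisms_M2_G21 (α β : ℝ) (hα : 0 < α) (hβ : β ≠ 0)
    (a₆ : ℝ) (B : Matrix (Fin 2) (Fin 2) ℝ) :
    (!![(1:ℝ), 0, 0, 0;
        0, a₆, 0, 0;
        0, 0, B 0 0, B 0 1;
        0, 0, B 1 0, B 1 1])ᵀ *
      !![1/α^2, -β/α^2, 0, 0; -β/α^2, 1 + β^2/α^2, 0, 0; 0, 0, 1, 0; 0, 0, 0, (1:ℝ)] *
      !![(1:ℝ), 0, 0, 0;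
        0, a₆, 0, 0;
        0, 0, B 0 0, B 0 1;
        0, 0, B 1 0, B 1 1] =
      !![1/α^2, -β/α^2, 0, 0; -β/α^2, 1 + β^2/α^2, 0, 0; 0, 0, 1, 0; 0, 0, 0, (1:ℝ)] ↔
    a₆ = 1 ∧ B ∈ Matrix.orthogonalGroup (Fin 2) ℝ := by
  have hG : (!![1/α^2, -β/α^2; -β/α^2, 1 + β^2/α^2] : Matrix (Fin 2) (Fin 2) ℝ) 0 1 ≠ 0 := by
    simpa using ⟨hβ, hα.ne'⟩
  simp only [of_fin_four_eq_reindex_fromBlocks, ← eta_fin_two B, ← one_fin_two,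
    transpose_reindex_mul_reindex_mul_reindex, (reindex _ _).injective.eq_iff,
    fromBlocks_transpose_mul_mul_fromBlocks, fromBlocks_inj, mul_one, true_and,
    mem_orthogonalGroup_iff', transpose_mul_mul_diag_one_eq_self_iff hG]
end

section
/- Let M₁ = diag(1/α², 1, 1/α², 1) with α > 0. Among 4×4 matrices A of one of the two forms A = [[1,0,0,0],[a₅,a₆,0,0],[0,0,1,a₁₂],[0,0,a₁₅,a₁₆]] or A = [[0,0,1,0],[0,0,a₇,a₈],[1,0,0,0],[a₁₃,a₁₄,0,0]], the set of those with AᵀM₁A = M₁ forms a group isomorphic to the dihedral group of order 8. -/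
open Matrix

/-!
Comparing entries of `AᵀM₁A = M₁` kills every free parameter of the two shapes except two, which
must be `±1`: the isometric automorphisms are `diag(1, ε₁, 1, ε₂)` and the matrices exchanging
`x₀ ↔ x₂` and `x₁ ↔ x₃` up to the signs `ε₁, ε₂`. They act on the plane `(x₁, x₃)` as the
signed permutation matrices, i.e. as the symmetries of a square, and `r 1 ↦ quarterTurn`,
`sr 0 ↦ reflection` is a faithful representation of `DihedralGroup 4` with exactly these eight
matrices as image. Over `ℤ` the homomorphism property, injectivity and the image are finite
computations, checked by `decide`.
-/

/-- The automorphisms of 2A₂ (two allowed shapes). -/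
def AutShape (A : Matrix (Fin 4) (Fin 4) ℝ) : Prop :=
  (∃ a₅ a₆ a₁₂ a₁₅ a₁₆ : ℝ,
      A = !![1, 0, 0, 0; a₅, a₆, 0, 0; 0, 0, 1, a₁₂; 0, 0, a₁₅, a₁₆]) ∨
  (∃ a₇ a₈ a₁₃ a₁₄ : ℝ,
      A = !![0, 0, 1, 0; 0, 0, a₇, a₈; 1, 0, 0, 0; a₁₃, a₁₄, 0, 0])

theorem Function.Injective.exists_bijective_mul_of_range_eq {G M : Type*} [Mul G] [Mul M]
    {φ : G →ₙ* M} (hφ : Function.Injective φ) {P : M → Prop}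
    (hP : ∀ x, P x ↔ x ∈ Set.range φ) :
    ∃ f : {x // P x} → G, Function.Bijective f ∧ ∀ a b, ∃ h, f ⟨a.1 * b.1, h⟩ = f a * f b := by
  let e : {x // P x} ≃ G := (Equiv.subtypeEquivRight hP).trans (Equiv.ofInjective φ hφ).symm
  have he : ∀ a, φ (e a) = a.1 := fun a => Equiv.apply_ofInjective_symm hφ _
  refine ⟨e, e.bijective, fun a b => ⟨(hP _).2 ⟨e a * e b, by simp only [map_mul, he]⟩, hφ ?_⟩⟩
  simp only [map_mul, he]

theorem exists_intUnit_cast_eq_iff_mul_self_eq_one {R : Type*} [Ring R] [NoZeroDivisors R]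
    {e : R} : (∃ u : ℤˣ, ((u : ℤ) : R) = e) ↔ e * e = 1 := by
  rw [mul_self_eq_one_iff]
  constructor
  · rintro ⟨u, rfl⟩
    rcases Int.units_eq_one_or u with rfl | rfl <;> simp
  · rintro (rfl | rfl)
    exacts [⟨1, by simp⟩, ⟨-1, by simp⟩]

section SignedMatrices

variable {R : Type*}

def signDiag [Zero R] [One R] (e₁ e₂ : R) : Matrix (Fin 4) (Fin 4) R :=
  !![1, 0, 0, 0; 0, e₁, 0, 0; 0, 0, 1, 0; 0, 0, 0, e₂]

def signSwap [Zero R] [One R] (e₁ e₂ : R) : Matrix (Fin 4) (Fin 4) R :=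
  !![0, 0, 1, 0; 0, 0, 0, e₁; 1, 0, 0, 0; 0, e₂, 0, 0]

variable (R) [Ring R]

def signedMatrix : ℤˣ × ℤˣ ⊕ ℤˣ × ℤˣ → Matrix (Fin 4) (Fin 4) R
  | .inl (u₁, u₂) => signDiag (u₁ : ℤ) (u₂ : ℤ)
  | .inr (u₁, u₂) => signSwap (u₁ : ℤ) (u₂ : ℤ)

theorem mapMatrix_castRingHom_signedMatrix (p : ℤˣ × ℤˣ ⊕ ℤˣ × ℤˣ) :
    (Int.castRingHom R).mapMatrix (signedMatrix ℤ p) = signedMatrix R p := by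
  rcases p with ⟨u₁, u₂⟩ | ⟨u₁, u₂⟩ <;>
    ext i j <;> fin_cases i <;> fin_cases j <;> simp [signedMatrix, signDiag, signSwap]

end SignedMatrices

section Isometries

variable {R : Type*} [CommRing R] [NoZeroDivisors R] {β : R}

theorem lowerShape_isometric_iff (hβ : β ≠ 0) (a₅ a₆ a₁₂ a₁₅ a₁₆ : R) :
    (!![1, 0, 0, 0; a₅, a₆, 0, 0; 0, 0, 1, a₁₂; 0, 0, a₁₅, a₁₆])ᵀ *
        !![β, 0, 0, 0; 0, 1, 0, 0; 0, 0, β, 0; 0, 0, 0, 1] *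
        !![1, 0, 0, 0; a₅, a₆, 0, 0; 0, 0, 1, a₁₂; 0, 0, a₁₅, a₁₆] =
      !![β, 0, 0, 0; 0, 1, 0, 0; 0, 0, β, 0; 0, 0, 0, 1] ↔
    a₅ = 0 ∧ a₁₂ = 0 ∧ a₁₅ = 0 ∧ a₆ * a₆ = 1 ∧ a₁₆ * a₁₆ = 1 := by
  constructor
  · intro h
    have h00 := congrFun (congrFun h 0) 0
    have h11 := congrFun (congrFun h 1) 1
    have h22 := congrFun (congrFun h 2) 2
    have h23 := congrFun (congrFun h 2) 3
    have h33 := congrFun (congrFun h 3) 3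
    simp only [Matrix.mul_apply, transpose_apply, of_apply, cons_val', cons_val_zero,
      cons_val_fin_one, Fin.sum_univ_four, one_mul, cons_val_one, cons_val, zero_mul, add_zero,
      mul_zero, mul_one, zero_add, add_eq_left, mul_eq_zero, or_self] at h00 h11 h22 h23 h33
    subst h00 h22
    have h12 : a₁₂ = 0 := (mul_eq_zero.1 (by simpa using h23)).resolve_left hβ
    subst h12
    exact ⟨rfl, rfl, rfl, h11, by simpa using h33⟩
  · rintro ⟨rfl, rfl, rfl, h₆, h₁₆⟩
    ext i j
    fin_cases i <;> fin_cases j <;> simp [Matrix.mul_apply, Fin.sum_univ_four, h₆, h₁₆]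

theorem swapShape_isometric_iff (a₇ a₈ a₁₃ a₁₄ : R) :
    (!![0, 0, 1, 0; 0, 0, a₇, a₈; 1, 0, 0, 0; a₁₃, a₁₄, 0, 0])ᵀ *
        !![β, 0, 0, 0; 0, 1, 0, 0; 0, 0, β, 0; 0, 0, 0, 1] *
        !![0, 0, 1, 0; 0, 0, a₇, a₈; 1, 0, 0, 0; a₁₃, a₁₄, 0, 0] =
      !![β, 0, 0, 0; 0, 1, 0, 0; 0, 0, β, 0; 0, 0, 0, 1] ↔
    a₇ = 0 ∧ a₁₃ = 0 ∧ a₈ * a₈ = 1 ∧ a₁₄ * a₁₄ = 1 := by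
  constructor
  · intro h
    have h00 := congrFun (congrFun h 0) 0
    have h11 := congrFun (congrFun h 1) 1
    have h22 := congrFun (congrFun h 2) 2
    have h33 := congrFun (congrFun h 3) 3
    simp only [Matrix.mul_apply, transpose_apply, of_apply, cons_val', cons_val_zero,
      cons_val_fin_one, Fin.sum_univ_four, zero_mul, cons_val_one, add_zero, cons_val, one_mul,
      zero_add, mul_zero, mul_one, add_eq_left, mul_eq_zero, or_self] at h00 h11 h22 h33
    exact ⟨h22, h00, h33, h11⟩
  · rintro ⟨rfl, rfl, h₈, h₁₄⟩
    ext i j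
    fin_cases i <;> fin_cases j <;> simp [Matrix.mul_apply, Fin.sum_univ_four, h₈, h₁₄]

end Isometries

theorem autShape_isometric_iff {β : ℝ} (hβ : β ≠ 0) (A : Matrix (Fin 4) (Fin 4) ℝ) :
    AutShape A ∧
        Aᵀ * !![β, 0, 0, 0; 0, 1, 0, 0; 0, 0, β, 0; 0, 0, 0, 1] * A =
          !![β, 0, 0, 0; 0, 1, 0, 0; 0, 0, β, 0; 0, 0, 0, 1] ↔
      A ∈ Set.range (signedMatrix ℝ) := by
  constructor
  · rintro ⟨⟨a₅, a₆, a₁₂, a₁₅, a₁₆, rfl⟩ | ⟨a₇, a₈, a₁₃, a₁₄, rfl⟩, hA⟩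
    · obtain ⟨rfl, rfl, rfl, h₆, h₁₆⟩ := (lowerShape_isometric_iff hβ _ _ _ _ _).1 hA
      obtain ⟨u₁, rfl⟩ := exists_intUnit_cast_eq_iff_mul_self_eq_one.2 h₆
      obtain ⟨u₂, rfl⟩ := exists_intUnit_cast_eq_iff_mul_self_eq_one.2 h₁₆
      exact ⟨.inl (u₁, u₂), rfl⟩
    · obtain ⟨rfl, rfl, h₈, h₁₄⟩ := (swapShape_isometric_iff _ _ _ _).1 hA
      obtain ⟨u₁, rfl⟩ := exists_intUnit_cast_eq_iff_mul_self_eq_one.2 h₈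
      obtain ⟨u₂, rfl⟩ := exists_intUnit_cast_eq_iff_mul_self_eq_one.2 h₁₄
      exact ⟨.inr (u₁, u₂), rfl⟩
  · rintro ⟨⟨u₁, u₂⟩ | ⟨u₁, u₂⟩, rfl⟩
    · refine ⟨.inl ⟨0, _, 0, 0, _, rfl⟩,
        (lowerShape_isometric_iff hβ _ _ _ _ _).2 ⟨rfl, rfl, rfl, ?_, ?_⟩⟩
      all_goals exact exists_intUnit_cast_eq_iff_mul_self_eq_one.1 ⟨_, rfl⟩
    · refine ⟨.inr ⟨0, _, 0, _, rfl⟩,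
        (swapShape_isometric_iff _ _ _ _).2 ⟨rfl, rfl, ?_, ?_⟩⟩
      all_goals exact exists_intUnit_cast_eq_iff_mul_self_eq_one.1 ⟨_, rfl⟩

section Dihedral

open DihedralGroup

def quarterTurn : Matrix (Fin 4) (Fin 4) ℤ :=
  !![0, 0, 1, 0; 0, 0, 0, 1; 1, 0, 0, 0; 0, -1, 0, 0]

def reflection : Matrix (Fin 4) (Fin 4) ℤ :=
  !![1, 0, 0, 0; 0, -1, 0, 0; 0, 0, 1, 0; 0, 0, 0, 1]

def dihedralIntRep : DihedralGroup 4 →* Matrix (Fin 4) (Fin 4) ℤ where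
  toFun
    | r i => quarterTurn ^ i.val
    | sr i => reflection * quarterTurn ^ i.val
  map_one' := by decide
  map_mul' := by decide

theorem dihedralIntRep_injective : Function.Injective dihedralIntRep := by decide

theorem range_dihedralIntRep : Set.range dihedralIntRep = Set.range (signedMatrix ℤ) := by
  refine subset_antisymm ?_ ?_ <;> rintro _ ⟨x, rfl⟩ <;> revert x <;> decide

variable (R : Type*) [Ring R]

def dihedralRep : DihedralGroup 4 →* Matrix (Fin 4) (Fin 4) R :=
  (Int.castRingHom R).mapMatrix.toMonoidHom.comp dihedralIntRep

theorem dihedralRep_injective [CharZero R] : Function.Injective (dihedralRep R) :=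
  (Matrix.map_injective Int.cast_injective).comp dihedralIntRep_injective

theorem range_dihedralRep : Set.range (dihedralRep R) = Set.range (signedMatrix R) := by
  rw [dihedralRep, MonoidHom.coe_comp, Set.range_comp, range_dihedralIntRep, ← Set.range_comp]
  exact congrArg Set.range (funext (mapMatrix_castRingHom_signedMatrix R))

end Dihedral

theorem isometric_automorphisms_M1_G2_dihedral (α : ℝ) (hα : 0 < α) :
    ∃ f : {A : Matrix (Fin 4) (Fin 4) ℝ //
        AutShape A ∧
        Aᵀ * !![1/α^2, 0, 0, 0; 0, 1, 0, 0; 0, 0, 1/α^2, 0; 0, 0, 0, (1:ℝ)] * A =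
          !![1/α^2, 0, 0, 0; 0, 1, 0, 0; 0, 0, 1/α^2, 0; 0, 0, 0, (1:ℝ)]} →
      DihedralGroup 4,
      Function.Bijective f ∧
      ∀ a b, ∃ h, f ⟨a.1 * b.1, h⟩ = f a * f b := by
  have hβ : 1 / α ^ 2 ≠ 0 := by positivity
  refine Function.Injective.exists_bijective_mul_of_range_eq
    (φ := (dihedralRep ℝ).toMulHom) (dihedralRep_injective ℝ) fun A => ?_
  rw [autShape_isometric_iff hβ, ← range_dihedralRep]
  rfl
end

section
/- Let M₁ = diag(1/α², 1, 1/β², 1) with α, β > 0. A 4×4 matrix A of the form [[a₁,a₂,a₃,0],[0,a₁,a₇,0],[0,0,1,0],[0,0,a₁₅,a₁₆]] satisfies AᵀM₁A = M₁ if and only if a₂ = a₃ = a₇ = a₁₅ = 0, a₁ = ±1 and a₁₆ = ±1. In particular the group of such matrices is isomorphic to (ℤ/2)². -/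
open Matrix

theorem isometric_automorphisms_M1_G32 (α β : ℝ) (hα : 0 < α) (hβ : 0 < β) :
    (∀ a₁ a₂ a₃ a₇ a₁₅ a₁₆ : ℝ,
      (!![a₁, a₂, a₃, 0; 0, a₁, a₇, 0; 0, 0, 1, 0; 0, 0, a₁₅, a₁₆])ᵀ *
        !![1/α^2, 0, 0, 0; 0, 1, 0, 0; 0, 0, 1/β^2, 0; 0, 0, 0, (1:ℝ)] *
        !![a₁, a₂, a₃, 0; 0, a₁, a₇, 0; 0, 0, 1, 0; 0, 0, a₁₅, a₁₆] =
        !![1/α^2, 0, 0, 0; 0, 1, 0, 0; 0, 0, 1/β^2, 0; 0, 0, 0, (1:ℝ)] ↔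
      a₂ = 0 ∧ a₃ = 0 ∧ a₇ = 0 ∧ a₁₅ = 0 ∧ (a₁ = 1 ∨ a₁ = -1) ∧ (a₁₆ = 1 ∨ a₁₆ = -1)) ∧
    ({A : Matrix (Fin 4) (Fin 4) ℝ |
        (∃ a₁ a₂ a₃ a₇ a₁₅ a₁₆ : ℝ,
          A = !![a₁, a₂, a₃, 0; 0, a₁, a₇, 0; 0, 0, 1, 0; 0, 0, a₁₅, a₁₆]) ∧
        Aᵀ * !![1/α^2, 0, 0, 0; 0, 1, 0, 0; 0, 0, 1/β^2, 0; 0, 0, 0, (1:ℝ)] * A =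
          !![1/α^2, 0, 0, 0; 0, 1, 0, 0; 0, 0, 1/β^2, 0; 0, 0, 0, (1:ℝ)]} =
      {A : Matrix (Fin 4) (Fin 4) ℝ | ∃ ε₁ ε₂ : ℝ,
        (ε₁ = 1 ∨ ε₁ = -1) ∧ (ε₂ = 1 ∨ ε₂ = -1) ∧
        A = !![ε₁, 0, 0, 0; 0, ε₁, 0, 0; 0, 0, 1, 0; 0, 0, 0, ε₂]}) := by
  have ht : ∀ a₁ a₂ a₃ a₇ a₁₅ a₁₆ : ℝ,
      (!![a₁, a₂, a₃, 0; 0, a₁, a₇, 0; 0, 0, 1, 0; 0, 0, a₁₅, a₁₆])ᵀ =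
        !![a₁, 0, 0, 0; a₂, a₁, 0, 0; a₃, a₇, 1, a₁₅; 0, 0, 0, a₁₆] := by
    intro a₁ a₂ a₃ a₇ a₁₅ a₁₆
    ext i j
    fin_cases i <;> fin_cases j <;> rfl
  have key0 : ∀ m n : ℝ, 0 < m → 0 < n → ∀ a₁ a₂ a₃ a₇ a₁₅ a₁₆ : ℝ,
      ((!![a₁, a₂, a₃, 0; 0, a₁, a₇, 0; 0, 0, 1, 0; 0, 0, a₁₅, a₁₆])ᵀ *
        !![m, 0, 0, 0; 0, 1, 0, 0; 0, 0, n, 0; 0, 0, 0, (1:ℝ)] *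
        !![a₁, a₂, a₃, 0; 0, a₁, a₇, 0; 0, 0, 1, 0; 0, 0, a₁₅, a₁₆] =
        !![m, 0, 0, 0; 0, 1, 0, 0; 0, 0, n, 0; 0, 0, 0, (1:ℝ)] ↔
      a₂ = 0 ∧ a₃ = 0 ∧ a₇ = 0 ∧ a₁₅ = 0 ∧ (a₁ = 1 ∨ a₁ = -1) ∧ (a₁₆ = 1 ∨ a₁₆ = -1)) := by
    intro m n hm hn a₁ a₂ a₃ a₇ a₁₅ a₁₆
    rw [ht]
    constructor
    · intro h
      have h11 := congrFun (congrFun h 0) 0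
      have h12 := congrFun (congrFun h 0) 1
      have h13 := congrFun (congrFun h 0) 2
      have h23 := congrFun (congrFun h 1) 2
      have h33 := congrFun (congrFun h 2) 2
      have h44 := congrFun (congrFun h 3) 3
      simp [Matrix.mul_apply, Fin.sum_univ_four] at h11 h12 h13 h23 h33 h44
      have ha1 : a₁ ^ 2 = 1 := by
        have := mul_left_cancel₀ (ne_of_gt hm)
          (show m * a₁ ^ 2 = m * 1 by linear_combination h11)
        linarith
      have ha1ne : a₁ ≠ 0 := by
        intro h0; rw [h0] at ha1; norm_num at ha1
      have h2 : a₂ = 0 := h12.resolve_left (not_or.mpr ⟨ha1ne, hm.ne'⟩)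
      have h3 : a₃ = 0 := h13.resolve_left (not_or.mpr ⟨ha1ne, hm.ne'⟩)
      have h7 : a₇ = 0 := by
        have h' : a₁ * a₇ = 0 := by linear_combination h23 - (m * a₃) * h2
        exact (mul_eq_zero.mp h').resolve_left ha1ne
      have h15 : a₁₅ = 0 := by
        have h' : a₁₅ * a₁₅ = 0 := by
          linear_combination h33 - (m * a₃) * h3 - a₇ * h7
        exact mul_self_eq_zero.mp h'
      refine ⟨h2, h3, h7, h15, ?_, ?_⟩
      · have h' : (a₁ - 1) * (a₁ + 1) = 0 := by linear_combination ha1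
        rcases mul_eq_zero.mp h' with h' | h'
        · exact Or.inl (by linarith)
        · exact Or.inr (by linarith)
      · have h' : (a₁₆ - 1) * (a₁₆ + 1) = 0 := by linear_combination h44
        rcases mul_eq_zero.mp h' with h' | h'
        · exact Or.inl (by linarith)
        · exact Or.inr (by linarith)
    · rintro ⟨rfl, rfl, rfl, rfl, h1, h16⟩
      ext i j
      fin_cases i <;> fin_cases j <;>
        simp [Matrix.mul_apply, Fin.sum_univ_four, Matrix.vecHead, Matrix.vecTail, Function.comp] <;>
        rcases h1 with rfl | rfl <;> rcases h16 with rfl | rfl <;> ring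
  have key := key0 (1/α^2) (1/β^2) (by positivity) (by positivity)
  refine ⟨key, ?_⟩
  ext A
  simp only [Set.mem_setOf_eq]
  constructor
  · rintro ⟨⟨a₁, a₂, a₃, a₇, a₁₅, a₁₆, rfl⟩, hM⟩
    obtain ⟨rfl, rfl, rfl, rfl, h1, h16⟩ := (key a₁ a₂ a₃ a₇ a₁₅ a₁₆).mp hM
    exact ⟨a₁, a₁₆, h1, h16, rfl⟩
  · rintro ⟨ε₁, ε₂, h1, h2, rfl⟩
    exact ⟨⟨ε₁, 0, 0, 0, 0, ε₂, rfl⟩, (key ε₁ 0 0 0 0 ε₂).mpr ⟨rfl, rfl, rfl, rfl, h1, h2⟩⟩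
end

section
/- Let M₁ = diag(1, 1, 1/α², 1) with α > 0, α≠1. A 4×4 matrix A of the form [[a₁,a₂,a₃,0],[a₅,a₆,a₇,0],[0,0,1,0],[0,0,a₁₅,a₁₆]] satisfies AᵀM₁A = M₁ if and only if the upper-left 2×2 block [[a₁,a₂],[a₅,a₆]] is in O(2), a₃ = a₇ = a₁₅ = 0, and a₁₆ = ±1. -/
open Matrix

set_option maxHeartbeats 1000000 in
theorem isometric_automorphisms_M1_G33 (α : ℝ) (hα : 0 < α) (hα1 : α ≠ 1)
    (a₁ a₂ a₃ a₅ a₆ a₇ a₁₅ a₁₆ : ℝ) :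
    (!![a₁, a₂, a₃, 0; a₅, a₆, a₇, 0; 0, 0, 1, 0; 0, 0, a₁₅, a₁₆])ᵀ *
      !![1, 0, 0, 0; 0, 1, 0, 0; 0, 0, 1/α^2, 0; 0, 0, 0, (1:ℝ)] *
      !![a₁, a₂, a₃, 0; a₅, a₆, a₇, 0; 0, 0, 1, 0; 0, 0, a₁₅, a₁₆] =
      !![1, 0, 0, 0; 0, 1, 0, 0; 0, 0, 1/α^2, 0; 0, 0, 0, (1:ℝ)] ↔
    !![a₁, a₂; a₅, a₆] ∈ Matrix.orthogonalGroup (Fin 2) ℝ ∧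
      a₃ = 0 ∧ a₇ = 0 ∧ a₁₅ = 0 ∧ (a₁₆ = 1 ∨ a₁₆ = -1) := by
  have hα2 : (0:ℝ) < α^2 := by positivity
  rw [Matrix.mem_orthogonalGroup_iff']
  constructor
  · intro h
    have e00 := congrFun (congrFun h 0) 0
    have e01 := congrFun (congrFun h 0) 1
    have e02 := congrFun (congrFun h 0) 2
    have e11 := congrFun (congrFun h 1) 1
    have e12 := congrFun (congrFun h 1) 2
    have e22 := congrFun (congrFun h 2) 2
    have e33 := congrFun (congrFun h 3) 3
    clear h
    simp [Matrix.mul_apply, Fin.sum_univ_four, Matrix.vecHead, Matrix.vecTail,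
      Matrix.transpose_apply] at e00 e01 e02 e11 e12 e22 e33
    have h3 : a₃ = 0 := by nlinarith [sq_nonneg a₃, sq_nonneg a₇, sq_nonneg a₁₅]
    have h7 : a₇ = 0 := by nlinarith [sq_nonneg a₃, sq_nonneg a₇, sq_nonneg a₁₅]
    have h15 : a₁₅ = 0 := by nlinarith [sq_nonneg a₃, sq_nonneg a₇, sq_nonneg a₁₅]
    refine ⟨?_, h3, h7, h15, mul_self_eq_one_iff.mp e33⟩
    ext i j
    fin_cases i <;> fin_cases j <;>
      simp [Matrix.mul_apply, Fin.sum_univ_two, star, Matrix.vecHead, Matrix.vecTail,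
        Matrix.transpose_apply] <;> linarith
  · rintro ⟨hO, rfl, rfl, rfl, h16⟩
    have e00 := congrFun (congrFun hO 0) 0
    have e01 := congrFun (congrFun hO 0) 1
    have e11 := congrFun (congrFun hO 1) 1
    clear hO
    simp [Matrix.mul_apply, Fin.sum_univ_two, star, Matrix.vecHead, Matrix.vecTail,
      Matrix.transpose_apply] at e00 e01 e11
    ext i j
    fin_cases i <;> fin_cases j <;>
      simp [Matrix.mul_apply, Fin.sum_univ_four, Matrix.vecHead, Matrix.vecTail,
        Matrix.transpose_apply] <;>
      rcases h16 with h | h <;> subst h <;> nlinarith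
end

section
/- Let λ > 0 and let M₂ be the symmetric positive definite 4×4 matrix with entries M₂ = [[1,0,0,0],[0,1,0,−λ],[0,0,1/β²,0],[0,−λ,0,λ²+1]] for β > 0. A matrix A of the form [[a₁,0,a₃,0],[0,a₆,a₇,0],[0,0,1,0],[0,0,a₁₅,a₁₆]] satisfies AᵀM₂A = M₂ if and only if a₃ = a₇ = a₁₅ = 0, a₁ = ±1, and a₆ = a₁₆ with a₆ = ±1. In particular this group is isomorphic to (ℤ/2)². -/
open Matrix

set_option maxHeartbeats 1000000 in
private lemma aux_prod4 (β l ε₁ ε₂ : ℝ) (h1 : ε₁ = 1 ∨ ε₁ = -1) (h2 : ε₂ = 1 ∨ ε₂ = -1) :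
    (!![ε₁, 0, 0, 0; 0, ε₂, 0, 0; 0, 0, 1, 0; 0, 0, 0, ε₂])ᵀ *
      !![1, 0, 0, 0; 0, 1, 0, -l; 0, 0, 1/β^2, 0; 0, -l, 0, l^2 + 1] *
      !![ε₁, 0, 0, 0; 0, ε₂, 0, 0; 0, 0, 1, 0; 0, 0, 0, ε₂] =
      !![1, 0, 0, 0; 0, 1, 0, -l; 0, 0, 1/β^2, 0; 0, -l, 0, l^2 + 1] := by
  rcases h1 with rfl | rfl <;> rcases h2 with rfl | rfl <;>
  · ext i j
    fin_cases i <;> fin_cases j <;>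
      simp [Matrix.mul_apply, Fin.sum_univ_four, Matrix.transpose_apply,
        Matrix.cons_val_zero, Matrix.cons_val_one, Matrix.head_cons, Matrix.head_fin_const,
        Matrix.cons_val', Matrix.empty_val', Matrix.cons_val_fin_one, Matrix.vecHead,
        Matrix.vecTail] <;> ring

theorem isometric_automorphisms_M2_Gc (β l : ℝ) (hβ : 0 < β) (hl : 0 < l) :
    (∀ a₁ a₃ a₆ a₇ a₁₅ a₁₆ : ℝ,
      (!![a₁, 0, a₃, 0; 0, a₆, a₇, 0; 0, 0, 1, 0; 0, 0, a₁₅, a₁₆])ᵀ *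
        !![1, 0, 0, 0; 0, 1, 0, -l; 0, 0, 1/β^2, 0; 0, -l, 0, l^2 + 1] *
        !![a₁, 0, a₃, 0; 0, a₆, a₇, 0; 0, 0, 1, 0; 0, 0, a₁₅, a₁₆] =
        !![1, 0, 0, 0; 0, 1, 0, -l; 0, 0, 1/β^2, 0; 0, -l, 0, l^2 + 1] ↔
      a₃ = 0 ∧ a₇ = 0 ∧ a₁₅ = 0 ∧ (a₁ = 1 ∨ a₁ = -1) ∧ a₆ = a₁₆ ∧ (a₆ = 1 ∨ a₆ = -1)) ∧
    ({A : Matrix (Fin 4) (Fin 4) ℝ |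
        (∃ a₁ a₃ a₆ a₇ a₁₅ a₁₆ : ℝ,
          A = !![a₁, 0, a₃, 0; 0, a₆, a₇, 0; 0, 0, 1, 0; 0, 0, a₁₅, a₁₆]) ∧
        Aᵀ * !![1, 0, 0, 0; 0, 1, 0, -l; 0, 0, 1/β^2, 0; 0, -l, 0, l^2 + 1] * A =
          !![1, 0, 0, 0; 0, 1, 0, -l; 0, 0, 1/β^2, 0; 0, -l, 0, l^2 + 1]} =
      {A : Matrix (Fin 4) (Fin 4) ℝ | ∃ ε₁ ε₂ : ℝ,
        (ε₁ = 1 ∨ ε₁ = -1) ∧ (ε₂ = 1 ∨ ε₂ = -1) ∧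
        A = !![ε₁, 0, 0, 0; 0, ε₂, 0, 0; 0, 0, 1, 0; 0, 0, 0, ε₂]}) := by
  have key : ∀ a₁ a₃ a₆ a₇ a₁₅ a₁₆ : ℝ,
      (!![a₁, 0, a₃, 0; 0, a₆, a₇, 0; 0, 0, 1, 0; 0, 0, a₁₅, a₁₆])ᵀ *
        !![1, 0, 0, 0; 0, 1, 0, -l; 0, 0, 1/β^2, 0; 0, -l, 0, l^2 + 1] *
        !![a₁, 0, a₃, 0; 0, a₆, a₇, 0; 0, 0, 1, 0; 0, 0, a₁₅, a₁₆] =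
        !![1, 0, 0, 0; 0, 1, 0, -l; 0, 0, 1/β^2, 0; 0, -l, 0, l^2 + 1] ↔
      a₃ = 0 ∧ a₇ = 0 ∧ a₁₅ = 0 ∧ (a₁ = 1 ∨ a₁ = -1) ∧ a₆ = a₁₆ ∧ (a₆ = 1 ∨ a₆ = -1) := by
    intro a₁ a₃ a₆ a₇ a₁₅ a₁₆
    constructor
    · intro h
      have h00 := congrFun (congrFun h 0) 0
      have h02 := congrFun (congrFun h 0) 2
      have h11 := congrFun (congrFun h 1) 1
      have h13 := congrFun (congrFun h 1) 3
      have h22 := congrFun (congrFun h 2) 2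
      simp [Matrix.mul_apply, Fin.sum_univ_four, Matrix.transpose_apply,
        Matrix.cons_val_zero, Matrix.cons_val_one, Matrix.head_cons, Matrix.head_fin_const,
        Matrix.cons_val', Matrix.empty_val', Matrix.cons_val_fin_one, Matrix.vecHead,
        Matrix.vecTail] at h00 h02 h11 h13 h22
      have h3 : a₃ = 0 := by nlinarith [sq_nonneg a₃, sq_nonneg (a₇ - l * a₁₅), sq_nonneg a₁₅]
      have h15 : a₁₅ = 0 := by nlinarith [sq_nonneg a₃, sq_nonneg (a₇ - l * a₁₅), sq_nonneg a₁₅]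
      have h7 : a₇ = 0 := by rw [h3, h15] at h22; nlinarith [sq_nonneg a₇]
      have h1 : a₁ = 1 ∨ a₁ = -1 := mul_self_eq_one_iff.mp (by nlinarith)
      have h6 : a₆ = 1 ∨ a₆ = -1 := mul_self_eq_one_iff.mp (by nlinarith)
      have h616 : a₆ * a₁₆ = 1 := by
        have hl' : l ≠ 0 := ne_of_gt hl
        have := h13
        field_simp at this ⊢
        nlinarith [this]
      have heq : a₆ = a₁₆ := by rcases h6 with h6' | h6' <;> nlinarith
      exact ⟨h3, h7, h15, h1, heq, h6⟩
    · rintro ⟨rfl, rfl, rfl, h1, rfl, h6⟩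
      exact aux_prod4 β l a₁ a₆ h1 h6
  refine ⟨key, ?_⟩
  ext A
  simp only [Set.mem_setOf_eq]
  constructor
  · rintro ⟨⟨a₁, a₃, a₆, a₇, a₁₅, a₁₆, rfl⟩, h⟩
    obtain ⟨rfl, rfl, rfl, h1, rfl, h6⟩ := (key a₁ a₃ a₆ a₇ a₁₅ a₁₆).mp h
    exact ⟨a₁, a₆, h1, h6, rfl⟩
  · rintro ⟨e1, e2, h1, h2, rfl⟩
    exact ⟨⟨e1, 0, e2, 0, 0, e2, rfl⟩,
      (key e1 0 e2 0 0 e2).mpr ⟨rfl, rfl, rfl, h1, rfl, h2⟩⟩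
end

section
/- Let M₁ = diag(1/α², 1, 1/λ², 1/μ²) with α, λ, μ > 0 pairwise generic. A matrix A of the form [[a₆², −a₁₂a₆, −a₁₂(a₆+a₇)+a₆a₈, a₄],[0,a₆,a₇,a₈],[0,0,a₆,a₁₂],[0,0,0,1]] satisfies AᵀM₁A = M₁ if and only if a₄ = a₇ = a₈ = a₁₂ = 0 and a₆ = ±1. In particular this group equals {I₄, diag(1,−1,−1,1)} ≅ ℤ/2. -/
set_option maxHeartbeats 2000000


open Matrix

theorem isometric_automorphisms_M1_G47 (α lam μ : ℝ) (hα : 0 < α) (hl : 0 < lam) (hμ : 0 < μ) :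
    (∀ a₄ a₆ a₇ a₈ a₁₂ : ℝ,
      (!![a₆^2, -a₁₂*a₆, -a₁₂*(a₆+a₇)+a₆*a₈, a₄; 0, a₆, a₇, a₈; 0, 0, a₆, a₁₂; 0, 0, 0, 1])ᵀ *
        !![1/α^2, 0, 0, 0; 0, 1, 0, 0; 0, 0, 1/lam^2, 0; 0, 0, 0, 1/μ^2] *
        !![a₆^2, -a₁₂*a₆, -a₁₂*(a₆+a₇)+a₆*a₈, a₄; 0, a₆, a₇, a₈; 0, 0, a₆, a₁₂; 0, 0, 0, 1] =
        !![1/α^2, 0, 0, 0; 0, 1, 0, 0; 0, 0, 1/lam^2, 0; 0, 0, 0, 1/μ^2] ↔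
      a₄ = 0 ∧ a₇ = 0 ∧ a₈ = 0 ∧ a₁₂ = 0 ∧ (a₆ = 1 ∨ a₆ = -1)) ∧
    ({A : Matrix (Fin 4) (Fin 4) ℝ |
        (∃ a₄ a₆ a₇ a₈ a₁₂ : ℝ,
          A = !![a₆^2, -a₁₂*a₆, -a₁₂*(a₆+a₇)+a₆*a₈, a₄; 0, a₆, a₇, a₈; 0, 0, a₆, a₁₂;
                 0, 0, 0, 1]) ∧
        Aᵀ * !![1/α^2, 0, 0, 0; 0, 1, 0, 0; 0, 0, 1/lam^2, 0; 0, 0, 0, 1/μ^2] * A =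
          !![1/α^2, 0, 0, 0; 0, 1, 0, 0; 0, 0, 1/lam^2, 0; 0, 0, 0, 1/μ^2]} =
      {(1 : Matrix (Fin 4) (Fin 4) ℝ),
        !![1, 0, 0, 0; 0, -1, 0, 0; 0, 0, -1, 0; 0, 0, 0, 1]}) := by
  have hiα : (0:ℝ) < (α^2)⁻¹ := by positivity
  have hil : (0:ℝ) < (lam^2)⁻¹ := by positivity
  have one4 : (1 : Matrix (Fin 4) (Fin 4) ℝ) = !![1,0,0,0;0,1,0,0;0,0,1,0;0,0,0,1] := by
    ext i j; fin_cases i <;> fin_cases j <;> simp [Matrix.one_apply, Matrix.vecHead, Matrix.vecTail]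
  have key : ∀ a₄ a₆ a₇ a₈ a₁₂ : ℝ,
      (!![a₆^2, -a₁₂*a₆, -a₁₂*(a₆+a₇)+a₆*a₈, a₄; 0, a₆, a₇, a₈; 0, 0, a₆, a₁₂; 0, 0, 0, 1])ᵀ *
        !![1/α^2, 0, 0, 0; 0, 1, 0, 0; 0, 0, 1/lam^2, 0; 0, 0, 0, 1/μ^2] *
        !![a₆^2, -a₁₂*a₆, -a₁₂*(a₆+a₇)+a₆*a₈, a₄; 0, a₆, a₇, a₈; 0, 0, a₆, a₁₂; 0, 0, 0, 1] =
        !![1/α^2, 0, 0, 0; 0, 1, 0, 0; 0, 0, 1/lam^2, 0; 0, 0, 0, 1/μ^2] ↔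
      a₄ = 0 ∧ a₇ = 0 ∧ a₈ = 0 ∧ a₁₂ = 0 ∧ (a₆ = 1 ∨ a₆ = -1) := by
    intro a₄ a₆ a₇ a₈ a₁₂
    constructor
    · intro h
      have h11 := congrFun (congrFun h 1) 1
      have h22 := congrFun (congrFun h 2) 2
      have h33 := congrFun (congrFun h 3) 3
      simp [Matrix.mul_apply, Fin.sum_univ_four, Matrix.transpose_apply,
        Matrix.cons_transpose, Matrix.head_transpose, Matrix.vecHead,
        Matrix.vecTail] at h11 h22 h33
      have h4 : a₄ = 0 := by
        have : a₄ * a₄ = 0 := by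
          nlinarith [mul_nonneg hiα.le (mul_self_nonneg a₄),
            mul_nonneg hil.le (mul_self_nonneg a₁₂), mul_self_nonneg a₈]
        exact mul_self_eq_zero.mp this
      have h8 : a₈ = 0 := by
        have : a₈ * a₈ = 0 := by
          nlinarith [mul_nonneg hiα.le (mul_self_nonneg a₄),
            mul_nonneg hil.le (mul_self_nonneg a₁₂), mul_self_nonneg a₈]
        exact mul_self_eq_zero.mp this
      have h12 : a₁₂ = 0 := by
        have : a₁₂ * a₁₂ = 0 := by
          nlinarith [mul_nonneg hiα.le (mul_self_nonneg a₄),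
            mul_nonneg hil.le (mul_self_nonneg a₁₂), mul_self_nonneg a₈]
        exact mul_self_eq_zero.mp this
      subst h4 h8 h12
      have h6sq : a₆ * a₆ = 1 := by nlinarith
      have h6 : a₆ = 1 ∨ a₆ = -1 := mul_self_eq_one_iff.mp h6sq
      have h7 : a₇ = 0 := by
        have : a₇ * a₇ = 0 := by nlinarith
        exact mul_self_eq_zero.mp this
      exact ⟨rfl, h7, rfl, rfl, h6⟩
    · rintro ⟨rfl, rfl, rfl, rfl, rfl | rfl⟩ <;>
        · ext i j
          fin_cases i <;> fin_cases j <;>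
            simp [Matrix.mul_apply, Fin.sum_univ_four, Matrix.transpose_apply,
              Matrix.cons_transpose, Matrix.head_transpose, Matrix.vecHead, Matrix.vecTail]
  refine ⟨key, ?_⟩
  ext A
  simp only [Set.mem_setOf_eq, Set.mem_insert_iff, Set.mem_singleton_iff]
  constructor
  · rintro ⟨⟨a₄, a₆, a₇, a₈, a₁₂, rfl⟩, heq⟩
    obtain ⟨h4, h7, h8, h12, h6⟩ := (key a₄ a₆ a₇ a₈ a₁₂).mp heq
    subst h4 h7 h8 h12
    rcases h6 with rfl | rfl
    · left; rw [one4]; norm_num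
    · right; norm_num
  · rintro (rfl | rfl)
    · refine ⟨⟨0, 1, 0, 0, 0, by rw [one4]; norm_num⟩, by simp⟩
    · have hm : !![(1:ℝ),0,0,0;0,-1,0,0;0,0,-1,0;0,0,0,1] =
          !![(-1:ℝ)^2, -0*(-1), -0*((-1)+0)+(-1)*0, 0; 0,-1,0,0; 0,0,-1,0; 0,0,0,1] := by
        norm_num
      refine ⟨⟨0, -1, 0, 0, 0, hm⟩, ?_⟩
      rw [hm]
      exact (key 0 (-1) 0 0 0).mpr ⟨rfl, rfl, rfl, rfl, Or.inr rfl⟩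
end

section
/- Let M₁ = diag(1, 1/β², 1/γ², 1/λ²) with β, γ, λ > 0. A matrix A of the form [[a₁,a₂,a₃,a₄],[0,a₁,a₂,a₈],[0,0,a₁,a₁₂],[0,0,0,1]] satisfies AᵀM₁A = M₁ if and only if a₂ = a₃ = a₄ = a₈ = a₁₂ = 0 and a₁ = ±1; hence the group of such matrices is {I₄, diag(−1,−1,−1,1)} ≅ ℤ/2. -/
open Matrix

lemma trans4_aux (a₁ a₂ a₃ a₄ a₈ a₁₂ : ℝ) :
    (!![a₁, a₂, a₃, a₄; 0, a₁, a₂, a₈; 0, 0, a₁, a₁₂; 0, 0, 0, 1])ᵀ =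
    !![a₁, 0, 0, 0; a₂, a₁, 0, 0; a₃, a₂, a₁, 0; a₄, a₈, a₁₂, 1] := by
  ext i j
  fin_cases i <;> fin_cases j <;> rfl

set_option maxHeartbeats 1000000 in
lemma key_aux (β γ lam : ℝ) (hβ : 0 < β) (hγ : 0 < γ) (hl : 0 < lam)
    (a₁ a₂ a₃ a₄ a₈ a₁₂ : ℝ) :
      (!![a₁, a₂, a₃, a₄; 0, a₁, a₂, a₈; 0, 0, a₁, a₁₂; 0, 0, 0, 1])ᵀ *
        !![1, 0, 0, 0; 0, 1/β^2, 0, 0; 0, 0, 1/γ^2, 0; 0, 0, 0, 1/lam^2] *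
        !![a₁, a₂, a₃, a₄; 0, a₁, a₂, a₈; 0, 0, a₁, a₁₂; 0, 0, 0, 1] =
        !![1, 0, 0, 0; 0, 1/β^2, 0, 0; 0, 0, 1/γ^2, 0; 0, 0, 0, 1/lam^2] ↔
      a₂ = 0 ∧ a₃ = 0 ∧ a₄ = 0 ∧ a₈ = 0 ∧ a₁₂ = 0 ∧ (a₁ = 1 ∨ a₁ = -1) := by
  have hb2 : β^2 ≠ 0 := by positivity
  have hc2 : γ^2 ≠ 0 := by positivity
  rw [trans4_aux, ← Matrix.ext_iff]
  constructor
  · intro h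
    have h11 := h 0 0
    have h12 := h 0 1
    have h13 := h 0 2
    have h14 := h 0 3
    have h24 := h 1 3
    have h34 := h 2 3
    simp [Matrix.mul_apply, Fin.sum_univ_four] at h11 h12 h13 h14 h24 h34
    have ha1 : a₁ ≠ 0 := by intro h0; rw [h0] at h11; norm_num at h11
    have e2 : a₂ = 0 := by tauto
    have e3 : a₃ = 0 := by tauto
    have e4 : a₄ = 0 := by tauto
    have e8 : a₈ = 0 := by
      rw [e2, e4] at h24
      have h' : a₁ * ((β^2)⁻¹ * a₈) = 0 := by linear_combination h24
      rcases mul_eq_zero.mp h' with h'' | h''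
      · exact absurd h'' ha1
      · rcases mul_eq_zero.mp h'' with h3 | h3
        · exact absurd h3 (inv_ne_zero hb2)
        · exact h3
    have e12 : a₁₂ = 0 := by
      rw [e2, e3, e4, e8] at h34
      have h' : a₁ * ((γ^2)⁻¹ * a₁₂) = 0 := by linear_combination h34
      rcases mul_eq_zero.mp h' with h'' | h''
      · exact absurd h'' ha1
      · rcases mul_eq_zero.mp h'' with h3 | h3
        · exact absurd h3 (inv_ne_zero hc2)
        · exact h3
    refine ⟨e2, e3, e4, e8, e12, ?_⟩
    have h' : (a₁ - 1) * (a₁ + 1) = 0 := by nlinarith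
    rcases mul_eq_zero.mp h' with h'' | h''
    · left; linarith
    · right; linarith
  · rintro ⟨rfl, rfl, rfl, rfl, rfl, h1 | h1⟩ <;> subst h1 <;> intro i j <;>
      fin_cases i <;> fin_cases j <;>
      simp [Matrix.mul_apply, Fin.sum_univ_four, Matrix.vecHead, Matrix.vecTail,
        Function.comp]

theorem isometric_automorphisms_M1_G44 (β γ lam : ℝ) (hβ : 0 < β) (hγ : 0 < γ) (hl : 0 < lam) :
    (∀ a₁ a₂ a₃ a₄ a₈ a₁₂ : ℝ,
      (!![a₁, a₂, a₃, a₄; 0, a₁, a₂, a₈; 0, 0, a₁, a₁₂; 0, 0, 0, 1])ᵀ *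
        !![1, 0, 0, 0; 0, 1/β^2, 0, 0; 0, 0, 1/γ^2, 0; 0, 0, 0, 1/lam^2] *
        !![a₁, a₂, a₃, a₄; 0, a₁, a₂, a₈; 0, 0, a₁, a₁₂; 0, 0, 0, 1] =
        !![1, 0, 0, 0; 0, 1/β^2, 0, 0; 0, 0, 1/γ^2, 0; 0, 0, 0, 1/lam^2] ↔
      a₂ = 0 ∧ a₃ = 0 ∧ a₄ = 0 ∧ a₈ = 0 ∧ a₁₂ = 0 ∧ (a₁ = 1 ∨ a₁ = -1)) ∧
    ({A : Matrix (Fin 4) (Fin 4) ℝ |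
        (∃ a₁ a₂ a₃ a₄ a₈ a₁₂ : ℝ,
          A = !![a₁, a₂, a₃, a₄; 0, a₁, a₂, a₈; 0, 0, a₁, a₁₂; 0, 0, 0, 1]) ∧
        Aᵀ * !![1, 0, 0, 0; 0, 1/β^2, 0, 0; 0, 0, 1/γ^2, 0; 0, 0, 0, 1/lam^2] * A =
          !![1, 0, 0, 0; 0, 1/β^2, 0, 0; 0, 0, 1/γ^2, 0; 0, 0, 0, 1/lam^2]} =
      {(1 : Matrix (Fin 4) (Fin 4) ℝ),
        !![-1, 0, 0, 0; 0, -1, 0, 0; 0, 0, -1, 0; 0, 0, 0, 1]}) := by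
  have hone : (1 : Matrix (Fin 4) (Fin 4) ℝ) =
      !![1, 0, 0, 0; 0, 1, 0, 0; 0, 0, 1, 0; 0, 0, 0, 1] := by
    ext i j
    fin_cases i <;> fin_cases j <;> simp [Matrix.one_apply, Matrix.vecHead, Matrix.vecTail]
  refine ⟨fun a₁ a₂ a₃ a₄ a₈ a₁₂ => key_aux β γ lam hβ hγ hl a₁ a₂ a₃ a₄ a₈ a₁₂, ?_⟩
  ext A
  simp only [Set.mem_setOf_eq, Set.mem_insert_iff, Set.mem_singleton_iff]
  constructor
  · rintro ⟨⟨a₁, a₂, a₃, a₄, a₈, a₁₂, rfl⟩, hEq⟩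
    obtain ⟨e2, e3, e4, e8, e12, h1⟩ :=
      (key_aux β γ lam hβ hγ hl a₁ a₂ a₃ a₄ a₈ a₁₂).mp hEq
    subst e2 e3 e4 e8 e12
    rcases h1 with rfl | rfl
    · left; rw [hone]
    · right; rfl
  · rintro (rfl | rfl)
    · refine ⟨⟨1, 0, 0, 0, 0, 0, by rw [hone]⟩, ?_⟩
      rw [hone]
      exact (key_aux β γ lam hβ hγ hl 1 0 0 0 0 0).mpr ⟨rfl, rfl, rfl, rfl, rfl, Or.inl rfl⟩
    · exact ⟨⟨-1, 0, 0, 0, 0, 0, rfl⟩,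
        (key_aux β γ lam hβ hγ hl (-1) 0 0 0 0 0).mpr ⟨rfl, rfl, rfl, rfl, rfl, Or.inr rfl⟩⟩
end
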